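/- arXiv:math/0402184 — 3 statements merged into one kernel-verified Lean document; each statement's English description precedes it below -/
import Mathlib

section
/- Let F be a field of characteristic ≠ 2, V an F-vector space, and d ≥ 2. The intersection over 1 ≤ i ≤ d−1 of the subspaces V^{⊗(i−1)} ⊗ Λ^{!,2}(V) ⊗ V^{⊗(d−1−i)} of V^{⊗d} coincides with the subspace of Σ_d-anti-invariants, i.e., tensors t with σ(t) = sign(σ)·t for all σ ∈ Σ_d. -/
open scoped TensorProduct
open LinearMap

variable (F : Type) [Field F] (V : Type) [AddCommGroup V] [Module F V]

/-- The action of a permutation σ ∈ Σ_d on the d-th tensor power V^{⊗d}. -/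
noncomputable def permMap (d : ℕ) (σ : Equiv.Perm (Fin d)) :
    (⨂[F] _ : Fin d, V) →ₗ[F] ⨂[F] _ : Fin d, V :=
  (PiTensorProduct.reindex F (fun _ : Fin d => V) σ).toLinearMap

/-- The adjacent transposition (i, i+1) in Σ_d. -/
def swapAdj (d : ℕ) (i : Fin (d - 1)) : Equiv.Perm (Fin d) :=
  Equiv.swap ⟨i.1, by have := i.2; omega⟩ ⟨i.1 + 1, by have := i.2; omega⟩

/-- The subspace V^{⊗(i-1)} ⊗ Sym^{!,2}(V) ⊗ V^{⊗(d-1-i)} of V^{⊗d}, realized as the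
fixed subspace of the transposition (i,i+1) acting on V^{⊗d}. -/
noncomputable def symTwoPart (d : ℕ) (i : Fin (d - 1)) :
    Submodule F (⨂[F] _ : Fin d, V) :=
  LinearMap.eqLocus (permMap F V d (swapAdj d i)) LinearMap.id

/-- The subspace V^{⊗(i-1)} ⊗ Λ^{!,2}(V) ⊗ V^{⊗(d-1-i)} of V^{⊗d}, realized as the image
of (id - (i,i+1)) acting on V^{⊗d}; here Λ^{!,2}(V) = span{v⊗w - w⊗v} = range(id - flip). -/
noncomputable def lamTwoPart (d : ℕ) (i : Fin (d - 1)) :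
    Submodule F (⨂[F] _ : Fin d, V) :=
  LinearMap.range (LinearMap.id - permMap F V d (swapAdj d i))

/-- Λ^{!,d}(V) = ∩_{i=1}^{d-1} V^{⊗(i-1)} ⊗ Λ^{!,2}(V) ⊗ V^{⊗(d-1-i)}. -/
noncomputable def lamShriek (d : ℕ) : Submodule F (⨂[F] _ : Fin d, V) :=
  ⨅ i : Fin (d - 1), lamTwoPart F V d i

/-- Sym^{!,d}(V): the Σ_d-invariants of V^{⊗d}. -/
noncomputable def symShriek (d : ℕ) : Submodule F (⨂[F] _ : Fin d, V) :=
  ⨅ σ : Equiv.Perm (Fin d), LinearMap.eqLocus (permMap F V d σ) LinearMap.id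

/-- The subspace of V^{⊗d} spanned by all t - σ(t). -/
noncomputable def symRel (d : ℕ) : Submodule F (⨂[F] _ : Fin d, V) :=
  ⨆ σ : Equiv.Perm (Fin d), LinearMap.range (LinearMap.id - permMap F V d σ)

/-- Sym^{*,d}(V): the Σ_d-coinvariants of V^{⊗d}. -/
noncomputable abbrev symStar (d : ℕ) :=
  (⨂[F] _ : Fin d, V) ⧸ symRel F V d

/-- The sum of the subspaces V^{⊗(i-1)} ⊗ Sym^{!,2}(V) ⊗ V^{⊗(d-1-i)} of V^{⊗d}. -/
noncomputable def lamRel (d : ℕ) : Submodule F (⨂[F] _ : Fin d, V) :=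
  ⨆ i : Fin (d - 1), symTwoPart F V d i

/-- Λ^{*,d}(V): the quotient of V^{⊗d} by the sum of the subspaces
V^{⊗(i-1)} ⊗ Sym^{!,2}(V) ⊗ V^{⊗(d-1-i)}. -/
noncomputable abbrev lamStar (d : ℕ) :=
  (⨂[F] _ : Fin d, V) ⧸ lamRel F V d

lemma permMap_mul (d : ℕ) (σ τ : Equiv.Perm (Fin d)) (x : ⨂[F] _ : Fin d, V) :
    permMap F V d (σ * τ) x = permMap F V d σ (permMap F V d τ x) := by
  simp only [permMap, LinearEquiv.coe_coe, Equiv.Perm.mul_def,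
    ← PiTensorProduct.reindex_reindex]

lemma permMap_one (d : ℕ) (x : ⨂[F] _ : Fin d, V) : permMap F V d 1 x = x := by
  rw [show (1 : Equiv.Perm (Fin d)) = Equiv.refl _ from rfl]
  simp [permMap]

/-- For char F ≠ 2 and d ≥ 2, the intersection over 1 ≤ i ≤ d-1 of the subspaces
V^{⊗(i-1)} ⊗ Λ^{!,2}(V) ⊗ V^{⊗(d-1-i)} of V^{⊗d} coincides with the subspace of
Σ_d-anti-invariants, i.e. tensors t with σ(t) = sign(σ)·t for all σ ∈ Σ_d. -/
theorem lamShriek_eq_antiinvariants (h2 : (2 : F) ≠ 0) (d : ℕ) (hd : 2 ≤ d) :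
    (⨅ i : Fin (d - 1), lamTwoPart F V d i)
      = ⨅ σ : Equiv.Perm (Fin d),
          LinearMap.eqLocus (permMap F V d σ)
            (((Equiv.Perm.sign σ : ℤ)) • LinearMap.id) := by
  obtain ⟨n, rfl⟩ : ∃ n, d = n + 1 := ⟨d - 1, by omega⟩
  ext x
  simp only [Submodule.mem_iInf, lamTwoPart, LinearMap.mem_range, LinearMap.mem_eqLocus,
    LinearMap.smul_apply, LinearMap.id_coe, id_eq]
  constructor
  · intro hx
    have hA : ∀ i : Fin (n + 1 - 1), permMap F V (n+1) (swapAdj (n+1) i) x = -x := by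
      intro i
      obtain ⟨s, hs⟩ := hx i
      have hs' : s - permMap F V (n+1) (swapAdj (n+1) i) s = x := by
        simpa using hs
      have hτ2 : swapAdj (n+1) i * swapAdj (n+1) i = 1 := by
        simp [swapAdj, Equiv.swap_mul_self]
      calc permMap F V (n+1) (swapAdj (n+1) i) x
          = permMap F V (n+1) (swapAdj (n+1) i) s
            - permMap F V (n+1) (swapAdj (n+1) i)
              (permMap F V (n+1) (swapAdj (n+1) i) s) := by
            rw [← hs', map_sub]
        _ = permMap F V (n+1) (swapAdj (n+1) i) s - s := by
            rw [← permMap_mul, hτ2, permMap_one]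
        _ = -x := by rw [← hs']; abel
    intro σ
    have hσ : σ ∈ Submonoid.closure
        (Set.range fun i : Fin n ↦ Equiv.swap i.castSucc i.succ) := by
      rw [Equiv.Perm.mclosure_swap_castSucc_succ]; trivial
    induction hσ using Submonoid.closure_induction with
    | one => simp [permMap_one]
    | mul σ τ _ _ hσ hτ =>
        replace hσ : permMap F V (n+1) σ x = ((Equiv.Perm.sign σ : ℤ)) • x := hσ
        replace hτ : permMap F V (n+1) τ x = ((Equiv.Perm.sign τ : ℤ)) • x := hτ
        show permMap F V (n+1) (σ * τ) x = ((Equiv.Perm.sign (σ * τ) : ℤ)) • x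
        rw [permMap_mul, hτ, map_zsmul, hσ, smul_smul, map_mul, Units.val_mul, mul_comm]
    | mem τ hτ =>
        obtain ⟨i, rfl⟩ := hτ
        have hsw : Equiv.swap (i.castSucc) (i.succ) = swapAdj (n+1) i := by
          unfold swapAdj
          congr 1 <;> exact Fin.ext (by simp)
        have hsgn : Equiv.Perm.sign (swapAdj (n+1) i) = -1 :=
          Equiv.Perm.sign_swap (by simp [Fin.ext_iff])
        show permMap F V (n+1) (Equiv.swap i.castSucc i.succ) x
          = ((Equiv.Perm.sign (Equiv.swap i.castSucc i.succ) : ℤ)) • x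
        rw [hsw, hA i, hsgn]
        simp
  · intro hx i
    have hτ : permMap F V (n+1) (swapAdj (n+1) i) x = -x := by
      have := hx (swapAdj (n+1) i)
      rwa [show Equiv.Perm.sign (swapAdj (n+1) i) = -1 from
        Equiv.Perm.sign_swap (by simp [Fin.ext_iff]), Units.val_neg, Units.val_one,
        neg_smul, one_smul] at this
    refine ⟨(2 : F)⁻¹ • x, ?_⟩
    simp only [LinearMap.sub_apply, LinearMap.id_coe, id_eq, map_smul, hτ, smul_neg,
      sub_neg_eq_add, ← add_smul]
    rw [smul_add, ← add_smul, show (2:F)⁻¹ + (2:F)⁻¹ = 1 by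
      rw [← two_mul, mul_inv_cancel₀ h2], one_smul]
end

section
/- Let F be a field and V a finite-dimensional F-vector space. There is a canonical isomorphism Λ^{*,d}(V^*) ≅ (Λ^{!,d}(V))^*, where Λ^{!,d}(V) = ∩_{i=1}^{d−1} V^{⊗(i−1)} ⊗ Λ^{!,2}(V) ⊗ V^{⊗(d−1−i)} and Λ^{*,d}(V^*) is the quotient of (V^*)^{⊗d} by the sum of the subspaces (V^*)^{⊗(i−1)} ⊗ Sym^{!,2}(V^*) ⊗ (V^*)^{⊗(d−1−i)}. -/
open scoped TensorProduct
open LinearMap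

variable (F : Type) [Field F] (V : Type) [AddCommGroup V] [Module F V]

/-!
The canonical pairing `(V^*)^{⊗d} ≃ (V^{⊗d})^*` transports the action of a permutation `σ` to the
transpose of the action of `σ⁻¹`. For an adjacent transposition `τ = τ⁻¹` this identifies the
`τ`-invariants of `(V^*)^{⊗d}` with the annihilator of `range (1 - τ)` in `V^{⊗d}`, in every
characteristic. Annihilators turn the finite intersection defining `Λ^{!,d}(V)` into a sum, so the
pairing maps `lamRel (V^*)` onto the annihilator of `Λ^{!,d}(V)`, and `(V^{⊗d})^*/W^⊥ ≅ W^*`.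
-/

open PiTensorProduct Module

theorem PiTensorProduct.dualDistrib_comp_reindex {R M ι κ : Type*} [CommSemiring R]
    [AddCommMonoid M] [Module R M] [Fintype ι] [Fintype κ] (e : ι ≃ κ) :
    dualDistrib ∘ₗ (reindex R (fun _ => Dual R M) e).toLinearMap
      = (reindex R (fun _ => M) e.symm).toLinearMap.dualMap ∘ₗ dualDistrib := by
  apply PiTensorProduct.ext
  ext f v
  simp only [compMultilinearMap_apply, coe_comp, LinearEquiv.coe_coe, Function.comp_apply,
    reindex_tprod, dualMap_apply, Equiv.symm_symm]
  rw [dualDistrib_apply, dualDistrib_apply]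
  exact Fintype.prod_equiv e.symm _ _ fun k => by simp

theorem LinearEquiv.map_eqLocus_id_eq_dualAnnihilator_range {R M N : Type*} [CommRing R]
    [AddCommGroup M] [Module R M] [AddCommGroup N] [Module R N] (e : M ≃ₗ[R] Dual R N)
    {f : M →ₗ[R] M} {g : N →ₗ[R] N} (h : e.toLinearMap ∘ₗ f = g.dualMap ∘ₗ e.toLinearMap) :
    (eqLocus f LinearMap.id).map e.toLinearMap = (range (LinearMap.id - g)).dualAnnihilator := by
  ext φ
  obtain ⟨x, rfl⟩ := e.surjective φ
  have hx : e (f x) = g.dualMap (e x) := LinearMap.congr_fun h x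
  rw [Submodule.mem_map_equiv, e.symm_apply_apply, mem_eqLocus, id_apply, ← e.injective.eq_iff,
    hx, ← ker_dualMap_eq_dualAnnihilator_range, mem_ker, LinearMap.ext_iff, LinearMap.ext_iff]
  simp only [LinearMap.dualMap_apply, LinearMap.sub_apply, LinearMap.id_apply,
    LinearMap.zero_apply, map_sub, sub_eq_zero]
  exact forall_congr' fun _ => eq_comm

theorem map_dualDistribEquiv_symTwoPart [FiniteDimensional F V] (d : ℕ) (i : Fin (d - 1)) :
    (symTwoPart F (Dual F V) d i).map
        (dualDistribEquiv (R := F) (M := fun _ : Fin d => V)).toLinearMap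
      = (lamTwoPart F V d i).dualAnnihilator := by
  refine LinearEquiv.map_eqLocus_id_eq_dualAnnihilator_range (R := F)
    (M := ⨂[F] _ : Fin d, Dual F V) (N := ⨂[F] _ : Fin d, V) _ ?_
  have h := dualDistrib_comp_reindex (R := F) (M := V) (ι := Fin d) (κ := Fin d) (swapAdj d i)
  rwa [swapAdj, Equiv.symm_swap] at h

theorem map_dualDistribEquiv_lamRel [FiniteDimensional F V] (d : ℕ) :
    (lamRel F (Dual F V) d).map
        (dualDistribEquiv (R := F) (M := fun _ : Fin d => V)).toLinearMap
      = (lamShriek F V d).dualAnnihilator := by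
  rw [lamRel, Submodule.map_iSup, lamShriek, Subspace.dualAnnihilator_iInf_eq]
  exact iSup_congr (map_dualDistribEquiv_symTwoPart F V d)

/-- For finite-dimensional V, there is a canonical isomorphism
Λ^{*,d}(V^*) ≅ (Λ^{!,d}(V))^*. -/
theorem lamStar_dual_iso [FiniteDimensional F V] (d : ℕ) :
    Nonempty (lamStar F (Module.Dual F V) d ≃ₗ[F] Module.Dual F (lamShriek F V d)) := by
  exact ⟨(Submodule.Quotient.equiv _ _ _ (map_dualDistribEquiv_lamRel F V d)).trans
    (Subspace.quotAnnihilatorEquiv (lamShriek F V d))⟩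
end

section
/- Let F be a field and V a finite-dimensional F-vector space. If d > dim V, then Λ^{!,d}(V) = 0, where Λ^{!,d}(V) = ∩_{i=1}^{d−1} V^{⊗(i−1)} ⊗ Λ^{!,2}(V) ⊗ V^{⊗(d−1−i)} with Λ^{!,2}(V) the span of v⊗w − w⊗v. -/
open scoped TensorProduct
open LinearMap

variable (F : Type) [Field F] (V : Type) [AddCommGroup V] [Module F V]

theorem comp_swap_eq {α β : Type*} [DecidableEq α] (g : α → β) (a b : α)
    (h : g a = g b) : g ∘ Equiv.swap a b = g := by
  funext l
  simp only [Function.comp_apply, Equiv.swap_apply_def]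
  split_ifs with h1 h2
  · subst h1; exact h.symm
  · subst h2; exact h
  · rfl

theorem swapAdj_eq (d : ℕ) (i : Fin (d - 1)) (a b : Fin d) (ha : a.1 = i.1)
    (hb : b.1 = i.1 + 1) : swapAdj d i = Equiv.swap a b := by
  unfold swapAdj
  congr 1
  · exact Fin.ext ha.symm
  · exact Fin.ext hb.symm

/-- Coordinate functional attached to `f : Fin d → Fin n` and a basis `b` of `V`. -/
noncomputable def phiAux {n : ℕ} (d : ℕ) (b : Module.Basis (Fin n) F V) (f : Fin d → Fin n) :
    (⨂[F] _ : Fin d, V) →ₗ[F] F :=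
  PiTensorProduct.lift ((MultilinearMap.mkPiAlgebra F (Fin d) F).compLinearMap
    (fun i => b.coord (f i)))

theorem phiAux_tprod {n : ℕ} (d : ℕ) (b : Module.Basis (Fin n) F V) (f : Fin d → Fin n)
    (x : Fin d → V) :
    phiAux F V d b f (PiTensorProduct.tprod F x) = ∏ i, b.coord (f i) (x i) := by
  simp [phiAux]

theorem phiAux_perm {n : ℕ} (d : ℕ) (b : Module.Basis (Fin n) F V) (f : Fin d → Fin n)
    (σ : Equiv.Perm (Fin d)) (x : ⨂[F] _ : Fin d, V) :
    phiAux F V d b f (permMap F V d σ x) = phiAux F V d b (f ∘ σ) x := by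
  have h : (phiAux F V d b f).comp (permMap F V d σ) = phiAux F V d b (f ∘ σ) := by
    apply PiTensorProduct.ext
    apply MultilinearMap.ext
    intro y
    simp only [LinearMap.compMultilinearMap_apply, LinearMap.comp_apply, permMap,
      LinearEquiv.coe_coe, PiTensorProduct.reindex_tprod, phiAux_tprod, Function.comp_apply]
    exact (Equiv.prod_comp σ (fun i => b.coord (f i) (y (σ.symm i)))).symm.trans
      (by simp)
  exact LinearMap.congr_fun h x

theorem phiAux_basis {n : ℕ} (d : ℕ) (b : Module.Basis (Fin n) F V) (f g : Fin d → Fin n) :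
    phiAux F V d b f (PiTensorProduct.tprod F (fun i => b (g i)))
      = if f = g then 1 else 0 := by
  rw [phiAux_tprod]
  by_cases h : f = g
  · subst h; simp
  · rw [if_neg h]
    obtain ⟨i, hi⟩ : ∃ i, f i ≠ g i := by
      by_contra hc
      push_neg at hc
      exact h (funext hc)
    apply Finset.prod_eq_zero (Finset.mem_univ i)
    simp [Module.Basis.coord_apply, Module.Basis.repr_self, Finsupp.single_apply, (Ne.symm hi)]

theorem phiAux_eq_zero_imp {n : ℕ} (d : ℕ) (b : Module.Basis (Fin n) F V)
    (x : ⨂[F] _ : Fin d, V) (h : ∀ f : Fin d → Fin n, phiAux F V d b f x = 0) :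
    x = 0 := by
  have hspan : x ∈ Submodule.span F
      (Set.range (fun f : Fin d → Fin n => PiTensorProduct.tprod F (fun i => b (f i)))) := by
    have htop : Submodule.span F
        (Set.range (fun f : Fin d → Fin n => PiTensorProduct.tprod F (fun i => b (f i)))) = ⊤ := by
      rw [eq_top_iff, ← PiTensorProduct.span_tprod_eq_top, Submodule.span_le]
      rintro _ ⟨y, rfl⟩
      have hy : (PiTensorProduct.tprod F) y
          = (PiTensorProduct.tprod F) (fun i => ∑ j, b.repr (y i) j • b j) := by
        congr 1
        funext i
        exact (b.sum_repr (y i)).symm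
      rw [hy, MultilinearMap.map_sum]
      apply Submodule.sum_mem
      intro f _
      rw [MultilinearMap.map_smul_univ]
      exact Submodule.smul_mem _ _ (Submodule.subset_span ⟨f, rfl⟩)
    rw [htop]; trivial
  rw [Submodule.mem_span_range_iff_exists_fun] at hspan
  obtain ⟨c, hc⟩ := hspan
  have hcf : ∀ g, c g = 0 := by
    intro g
    have := h g
    rw [← hc, map_sum] at this
    simpa [map_smul, phiAux_basis, Finset.sum_ite_eq'] using this
  rw [← hc]
  simp [hcf]

/-- If V is finite-dimensional and d > dim V, then Λ^{!,d}(V) = 0. -/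
theorem lamShriek_eq_bot_of_dim_lt [FiniteDimensional F V]
    (d : ℕ) (hd : Module.finrank F V < d) :
    lamShriek F V d = ⊥ := by
  rw [eq_bot_iff]
  intro x hx
  simp only [Submodule.mem_bot]
  set n := Module.finrank F V with hn
  set b := Module.finBasis F V with hb
  have key : ∀ (i : Fin (d-1)) (f : Fin d → Fin n),
      (f ∘ swapAdj d i = f → phiAux F V d b f x = 0) ∧
      phiAux F V d b (f ∘ swapAdj d i) x = - phiAux F V d b f x := by
    intro i f
    have hxi : x ∈ lamTwoPart F V d i := (Submodule.mem_iInf _).mp hx i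
    obtain ⟨y, hy⟩ := hxi
    have hσσ : (f ∘ swapAdj d i) ∘ swapAdj d i = f := by
      funext j
      simp [swapAdj, Function.comp, Equiv.swap_apply_self]
    have h1 : phiAux F V d b f x
        = phiAux F V d b f y - phiAux F V d b (f ∘ swapAdj d i) y := by
      rw [← hy]
      simp [map_sub, phiAux_perm]
    have h2 : phiAux F V d b (f ∘ swapAdj d i) x
        = phiAux F V d b (f ∘ swapAdj d i) y - phiAux F V d b f y := by
      rw [← hy]
      simp [map_sub, phiAux_perm, hσσ]
    constructor
    · intro hf
      rw [h1, hf, sub_self]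
    · rw [h1, h2]; ring
  have zero_of_eq : ∀ m : ℕ, ∀ f : Fin d → Fin n, ∀ j k : Fin d,
      j < k → f j = f k → k.1 - j.1 ≤ m → phiAux F V d b f x = 0 := by
    intro m
    induction m with
    | zero =>
      intro f j k hjk _ hm
      exact absurd hm (by have := hjk; omega)
    | succ m ih =>
      intro f j k hjk hfjk hm
      by_cases hadj : k.1 = j.1 + 1
      · have hj : j.1 < d - 1 := by have := k.2; omega
        refine (key ⟨j.1, hj⟩ f).1 ?_
        rw [swapAdj_eq d ⟨j.1, hj⟩ j k rfl (by simpa using hadj)]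
        exact comp_swap_eq f j k hfjk
      · have hk2 := k.2
        have hk1 : k.1 - 1 < d - 1 := by omega
        have hjk2 : j.1 + 1 < k.1 := by omega
        obtain ⟨p, hp⟩ : ∃ p : Fin d, p.1 = k.1 - 1 := ⟨⟨k.1 - 1, by omega⟩, rfl⟩
        have hs : swapAdj d ⟨k.1 - 1, hk1⟩ = Equiv.swap p k :=
          swapAdj_eq d ⟨k.1 - 1, hk1⟩ p k (by simp [hp]) (by simp; omega)
        have h2 := (key ⟨k.1 - 1, hk1⟩ f).2
        rw [hs] at h2
        have hne1 : j ≠ p := by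
          intro hc
          rw [hc] at hjk2
          omega
        have hne2 : j ≠ k := hjk.ne
        have hzero : phiAux F V d b (f ∘ Equiv.swap p k) x = 0 := by
          refine ih (f ∘ Equiv.swap p k) j p ?_ ?_ ?_
          · rw [Fin.lt_def]
            omega
          · show f (Equiv.swap p k j) = f (Equiv.swap p k p)
            rw [Equiv.swap_apply_of_ne_of_ne hne1 hne2, Equiv.swap_apply_left]
            exact hfjk
          · omega
        rw [hzero] at h2
        have := h2.symm
        rwa [neg_eq_zero] at this
  apply phiAux_eq_zero_imp F V d b x
  intro f
  obtain ⟨j, k, hne, hfe⟩ := Fintype.exists_ne_map_eq_of_card_lt f (by simpa using hd)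
  rcases lt_or_gt_of_ne hne with h | h
  · exact zero_of_eq (k.1 - j.1) f j k h hfe le_rfl
  · exact zero_of_eq (j.1 - k.1) f k j h hfe.symm le_rfl
end
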